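/- arXiv:1905.12453 — 3 statements merged into one kernel-verified Lean document; each statement's English description precedes it below -/
import Mathlib

section
/- For any group G and elements u, v in G, the element uvu^{-1}v^{-1} embedded in the 3x3 block diagonal form diag(uvu^{-1}v^{-1}, 1, 1) equals the product of the four commutators: diag(u, u^{-1}, 1) · diag(v, 1, v^{-1}) · diag(u^{-1}, u, 1) · diag(v^{-1}, 1, v). Consequently, in the unitary group of M_3(A) for a unital C*-algebra A, every element diag(w,1,1) with w a commutator of unitaries of A is a product of commutators of unitaries lying in the connected component of the identity of U(M_3(A)). -/
open Matrix

namespace Stmt0Aux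

@[simp]
lemma unitary_coe_inv {R : Type*} [Monoid R] [StarMul R] (u : unitary R) :
    (↑(u⁻¹) : R) = star (u : R) := rfl

instance unitaryTopGroup {R : Type*} [Monoid R] [StarMul R] [TopologicalSpace R]
    [ContinuousMul R] [ContinuousStar R] : IsTopologicalGroup (unitary R) where
  continuous_inv := by
    apply continuous_induced_rng.2
    exact continuous_star.comp continuous_induced_dom

lemma mem_cc_of_path {X : Type*} [TopologicalSpace X] {f : ℝ → X} (hf : Continuous f)
    (t : ℝ) : f t ∈ connectedComponent (f 0) :=
  (isPreconnected_univ.image f hf.continuousOn).subset_connectedComponent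
    ⟨0, trivial, rfl⟩ ⟨t, trivial, rfl⟩

section StarFin

variable {A : Type*} [Ring A] [StarRing A]

lemma star_fin_three (a b c d e f g h i : A) :
    star !![a, b, c; d, e, f; g, h, i] =
      !![star a, star d, star g; star b, star e, star h; star c, star f, star i] := by
  rw [star_eq_conjTranspose, eta_fin_three (!![a, b, c; d, e, f; g, h, i]ᴴ)]
  simp [Matrix.conjTranspose_apply]

lemma diag3_eq (a b c : A) :
    Matrix.diagonal ![a, b, c] = !![a, 0, 0; 0, b, 0; 0, 0, c] := by
  ext i j
  fin_cases i <;> fin_cases j <;>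
    simp [Matrix.diagonal, Matrix.vecHead, Matrix.vecTail]

end StarFin

variable {A : Type*} [NormedRing A] [StarRing A] [CStarRing A] [CompleteSpace A]
    [NormedAlgebra ℂ A] [StarModule ℂ A]

local notation "M3" => Matrix (Fin 3) (Fin 3) A

omit [CompleteSpace A] [NormedAlgebra ℂ A] [StarModule ℂ A] in
lemma conj_mem_cc (D : unitary M3) {R : unitary M3}
    (hR : R ∈ connectedComponent (1 : unitary M3)) :
    D * R * D⁻¹ ∈ connectedComponent (1 : unitary M3) := by
  have hc : Continuous fun z : unitary M3 => D * z * D⁻¹ := by continuity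
  have := hc.image_connectedComponent_subset (1 : unitary M3)
  simpa using this ⟨R, hR, rfl⟩

/-- diagonal unitary -/
def diagU (p q r : unitary A) : unitary M3 :=
  ⟨Matrix.diagonal ![(p : A), q, r], by
    constructor <;>
    · rw [diag3_eq, star_fin_three, Matrix.mul_fin_three, Matrix.one_fin_three]
      simp [Unitary.coe_star_mul_self, Unitary.coe_mul_star_self]⟩

@[simp] lemma diagU_coe (p q r : unitary A) :
    (diagU p q r).val = Matrix.diagonal ![(p : A), q, r] := rfl

/-- rotation in coordinates 0,1 -/
noncomputable def rotC1 (t : ℝ) : Matrix (Fin 3) (Fin 3) ℂ :=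
  !![Real.cos t, -Real.sin t, 0; Real.sin t, Real.cos t, 0; 0, 0, 1]

/-- rotation in coordinates 0,2 -/
noncomputable def rotC2 (t : ℝ) : Matrix (Fin 3) (Fin 3) ℂ :=
  !![Real.cos t, 0, -Real.sin t; 0, 1, 0; Real.sin t, 0, Real.cos t]

lemma rotC1_mem (t : ℝ) : rotC1 t ∈ unitary (Matrix (Fin 3) (Fin 3) ℂ) := by
  have h := Real.sin_sq_add_cos_sq t
  constructor <;>
  · ext i j
    fin_cases i <;> fin_cases j <;>
      simp [rotC1, Matrix.mul_apply, Fin.sum_univ_three, Matrix.conjTranspose_apply,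
        Matrix.one_apply, Matrix.vecHead, Matrix.vecTail] <;>
    · simp only [← Complex.ofReal_cos, ← Complex.ofReal_sin, Complex.conj_ofReal,
        ← Complex.ofReal_mul, ← Complex.ofReal_neg, ← Complex.ofReal_add,
        ← Complex.ofReal_one, Complex.ofReal_inj, Complex.ofReal_eq_zero]
      nlinarith [h]

lemma rotC2_mem (t : ℝ) : rotC2 t ∈ unitary (Matrix (Fin 3) (Fin 3) ℂ) := by
  have h := Real.sin_sq_add_cos_sq t
  constructor <;>
  · ext i j
    fin_cases i <;> fin_cases j <;>
      simp [rotC2, Matrix.mul_apply, Fin.sum_univ_three, Matrix.conjTranspose_apply,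
        Matrix.one_apply, Matrix.vecHead, Matrix.vecTail] <;>
    · simp only [← Complex.ofReal_cos, ← Complex.ofReal_sin, Complex.conj_ofReal,
        ← Complex.ofReal_mul, ← Complex.ofReal_neg, ← Complex.ofReal_add,
        ← Complex.ofReal_one, Complex.ofReal_inj, Complex.ofReal_eq_zero]
      nlinarith [h]

lemma map_mem_unitary {Rc : Matrix (Fin 3) (Fin 3) ℂ}
    (h : Rc ∈ unitary (Matrix (Fin 3) (Fin 3) ℂ)) :
    Rc.map (algebraMap ℂ A) ∈ unitary M3 := by
  have hsc : Function.Semiconj (⇑(algebraMap ℂ A)) star star := fun z =>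
    (algebraMap_star_comm z : _)
  have hstar : (star Rc).map (algebraMap ℂ A) = star (Rc.map (algebraMap ℂ A)) := by
    simpa [star_eq_conjTranspose] using Matrix.conjTranspose_map (A := Rc)
      (⇑(algebraMap ℂ A)) hsc
  constructor
  · rw [← hstar, ← Matrix.map_mul, h.1]
    exact Matrix.map_one _ (map_zero _) (map_one _)
  · rw [← hstar, ← Matrix.map_mul, h.2]
    exact Matrix.map_one _ (map_zero _) (map_one _)

noncomputable def uRot1 (t : ℝ) : unitary M3 :=
  ⟨(rotC1 t).map (algebraMap ℂ A), map_mem_unitary (rotC1_mem t)⟩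

noncomputable def uRot2 (t : ℝ) : unitary M3 :=
  ⟨(rotC2 t).map (algebraMap ℂ A), map_mem_unitary (rotC2_mem t)⟩

lemma continuous_uRot1 : Continuous (uRot1 (A := A)) := by
  apply Continuous.subtype_mk
  apply Continuous.matrix_map _ (continuous_algebraMap ℂ A)
  apply continuous_matrix
  intro i j
  fin_cases i <;> fin_cases j <;>
    simp [rotC1, Matrix.vecHead, Matrix.vecTail] <;> fun_prop

lemma continuous_uRot2 : Continuous (uRot2 (A := A)) := by
  apply Continuous.subtype_mk
  apply Continuous.matrix_map _ (continuous_algebraMap ℂ A)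
  apply continuous_matrix
  intro i j
  fin_cases i <;> fin_cases j <;>
    simp [rotC2, Matrix.vecHead, Matrix.vecTail] <;> fun_prop

lemma uRot1_zero : uRot1 (A := A) 0 = 1 := by
  apply Subtype.ext
  show (rotC1 0).map (algebraMap ℂ A) = 1
  ext i j
  fin_cases i <;> fin_cases j <;>
    simp [rotC1, Matrix.one_apply, Matrix.vecHead, Matrix.vecTail]

lemma uRot2_zero : uRot2 (A := A) 0 = 1 := by
  apply Subtype.ext
  show (rotC2 0).map (algebraMap ℂ A) = 1
  ext i j
  fin_cases i <;> fin_cases j <;>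
    simp [rotC2, Matrix.one_apply, Matrix.vecHead, Matrix.vecTail]

lemma uRot1_half :
    (uRot1 (A := A) (Real.pi / 2)).val = !![0, -1, 0; 1, 0, 0; 0, 0, 1] := by
  show (rotC1 (Real.pi / 2)).map (algebraMap ℂ A) = _
  ext i j
  fin_cases i <;> fin_cases j <;>
    simp [rotC1, Matrix.vecHead, Matrix.vecTail]

lemma uRot2_half :
    (uRot2 (A := A) (Real.pi / 2)).val = !![0, 0, -1; 0, 1, 0; 1, 0, 0] := by
  show (rotC2 (Real.pi / 2)).map (algebraMap ℂ A) = _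
  ext i j
  fin_cases i <;> fin_cases j <;>
    simp [rotC2, Matrix.vecHead, Matrix.vecTail]

lemma uRot1_mem_cc (t : ℝ) :
    uRot1 (A := A) t ∈ connectedComponent (1 : unitary M3) := by
  have := mem_cc_of_path (continuous_uRot1 (A := A)) t
  rwa [uRot1_zero] at this

lemma uRot2_mem_cc (t : ℝ) :
    uRot2 (A := A) t ∈ connectedComponent (1 : unitary M3) := by
  have := mem_cc_of_path (continuous_uRot2 (A := A)) t
  rwa [uRot2_zero] at this

lemma diagU_eq_comm1 (x : unitary A) :
    diagU x x⁻¹ 1 = diagU x 1 1 * uRot1 (Real.pi / 2) *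
      (diagU x 1 1)⁻¹ * (uRot1 (Real.pi / 2))⁻¹ := by
  apply Subtype.ext
  simp only [MulMemClass.coe_mul, unitary_coe_inv, diagU_coe, uRot1_half, OneMemClass.coe_one]
  rw [diag3_eq, diag3_eq, star_fin_three, star_fin_three, Matrix.mul_fin_three,
    Matrix.mul_fin_three, Matrix.mul_fin_three]
  simp [Unitary.coe_mul_star_self]

lemma diagU_eq_comm2 (y : unitary A) :
    diagU y 1 y⁻¹ = diagU y 1 1 * uRot2 (Real.pi / 2) *
      (diagU y 1 1)⁻¹ * (uRot2 (Real.pi / 2))⁻¹ := by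
  apply Subtype.ext
  simp only [MulMemClass.coe_mul, unitary_coe_inv, diagU_coe, uRot2_half, OneMemClass.coe_one]
  rw [diag3_eq, diag3_eq, star_fin_three, star_fin_three, Matrix.mul_fin_three,
    Matrix.mul_fin_three, Matrix.mul_fin_three]
  simp [Unitary.coe_mul_star_self]

lemma diagU1_mem_cc (x : unitary A) :
    diagU x x⁻¹ 1 ∈ connectedComponent (1 : unitary M3) := by
  rw [diagU_eq_comm1]
  exact mul_mem_connectedComponent_one
    (conj_mem_cc _ (uRot1_mem_cc _))
    (inv_mem_connectedComponent_one (uRot1_mem_cc _))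

lemma diagU2_mem_cc (y : unitary A) :
    diagU y 1 y⁻¹ ∈ connectedComponent (1 : unitary M3) := by
  rw [diagU_eq_comm2]
  exact mul_mem_connectedComponent_one
    (conj_mem_cc _ (uRot2_mem_cc _))
    (inv_mem_connectedComponent_one (uRot2_mem_cc _))

end Stmt0Aux

open Stmt0Aux in
/-- the algebraic identity `diag(uvu⁻¹v⁻¹,1,1) = a b a⁻¹ b⁻¹` with
`a = diag(u,u⁻¹,1)`, `b = diag(v,1,v⁻¹)` (in the product group `G × G × G`), and its
consequence: in the unitary group of `M₃(A)` for a unital C*-algebra `A`, every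
`diag(w,1,1)` with `w` a commutator of unitaries of `A` is a product of commutators of
unitaries lying in the connected component of the identity. -/
theorem stmt_0 {G : Type*} [Group G] (u v : G)
    {A : Type*} [NormedRing A] [StarRing A] [CStarRing A] [CompleteSpace A]
    [NormedAlgebra ℂ A] [StarModule ℂ A] :
    (((u * v * u⁻¹ * v⁻¹, (1 : G), (1 : G)) : G × G × G) =
      ((u, u⁻¹, (1 : G)) : G × G × G) * (v, 1, v⁻¹) * ((u, u⁻¹, (1:G)) : G × G × G)⁻¹ *
        (((v, 1, v⁻¹) : G × G × G))⁻¹) ∧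
    (∀ w x y : unitary A, (w : A) = (x : A) * y * (↑x⁻¹ : A) * (↑y⁻¹ : A) →
      ∃ L : List (unitary (Matrix (Fin 3) (Fin 3) A)),
        (∀ c ∈ L, ∃ a b : unitary (Matrix (Fin 3) (Fin 3) A),
          a ∈ connectedComponent (1 : unitary (Matrix (Fin 3) (Fin 3) A)) ∧
          b ∈ connectedComponent (1 : unitary (Matrix (Fin 3) (Fin 3) A)) ∧
          c = a * b * a⁻¹ * b⁻¹) ∧
        (L.prod.val : Matrix (Fin 3) (Fin 3) A) = Matrix.diagonal ![(w : A), 1, 1]) := by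
  constructor
  · simp [Prod.ext_iff, mul_assoc]
  · intro w x y hw
    simp only [unitary_coe_inv] at hw
    set a : unitary (Matrix (Fin 3) (Fin 3) A) := diagU x x⁻¹ 1 with ha
    set b : unitary (Matrix (Fin 3) (Fin 3) A) := diagU y 1 y⁻¹ with hb
    refine ⟨[a * b * a⁻¹ * b⁻¹], ?_, ?_⟩
    · intro c hc
      simp only [List.mem_singleton] at hc
      exact ⟨a, b, diagU1_mem_cc x, diagU2_mem_cc y, hc⟩
    · simp only [List.prod_singleton, ha, hb]
      simp only [MulMemClass.coe_mul, unitary_coe_inv, diagU_coe, OneMemClass.coe_one]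
      rw [diag3_eq, diag3_eq, diag3_eq, star_fin_three, star_fin_three,
        Matrix.mul_fin_three, Matrix.mul_fin_three, Matrix.mul_fin_three]
      simp [Unitary.coe_star_mul_self, Unitary.coe_mul_star_self, star_star, ← hw]
end

section
/- Let G_n = { m / (p_1^{k_1} p_2^{k_2} ··· p_{n-1}^{k_{n-1}} p_n^l) : m ∈ Z, l ∈ Z_{≥0} } ⊆ Q, where p_1 < p_2 < ··· are the primes in increasing order and k_1, k_2, ... are fixed positive integers. Let G̃ = { (a_1, a_2, ...) ∈ ∏_{n=1}^∞ G_n : ∃ N such that a_N = a_{N+1} = ··· }. Then an element x ∈ G̃ is divisible by p_1^n for every n ≥ 1 if and only if x = (t, 0, 0, ...) for some t ∈ G_1. -/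
/-- the `j`-th prime (`prime9 0 = 2`, `prime9 1 = 3`, ...). -/
noncomputable def prime9 (j : ℕ) : ℕ := Nat.nth Nat.Prime j

/-- membership in the group `G_n = { m / (p₁^{k₁} ⋯ p_{n-1}^{k_{n-1}} pₙ^l) }`
(indexed here from `0`, so `Gmem9 k n` is the paper's `G_{n+1}`). -/
noncomputable def Gmem9 (k : ℕ → ℕ) (n : ℕ) (q : ℚ) : Prop :=
  ∃ m : ℤ, ∃ l : ℕ,
    q = (m : ℚ) / ((∏ j ∈ Finset.range n, (prime9 j : ℚ) ^ k j) * (prime9 n : ℚ) ^ l)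

/-- membership in `G̃`: eventually constant sequences with `a n ∈ G_n` for all `n`. -/
noncomputable def Gtilde9 (k : ℕ → ℕ) (a : ℕ → ℚ) : Prop :=
  (∀ n, Gmem9 k n (a n)) ∧ ∃ N, ∀ m, N ≤ m → a m = a N

/-!
For `m ≥ 1` the denominator of an element of `G_m` contains `2` exactly `k₁` times, so the
2-adic valuation is bounded below by `-k₁` on `G_m`. If `q = 2ⁿ y` with `y ∈ G_m` for every `n`,
then `v₂(q) ≥ n - k₁` for every `n`, forcing `q = 0`. Conversely `G₁ = ℤ[1/2]` is 2-divisible,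
so `(t / 2ⁿ, 0, 0, …)` divides `(t, 0, 0, …)` by `2ⁿ` inside `G̃`.
-/

lemma prime9_prime (j : ℕ) : (prime9 j).Prime := Nat.prime_nth_prime j

lemma prime9_zero : prime9 0 = 2 := Nat.nth_prime_zero_eq_two

lemma prime9_ne_two {j : ℕ} (hj : j ≠ 0) : prime9 j ≠ 2 := by
  have h := Nat.nth_strictMono Nat.infinite_setOfPred_prime (Nat.pos_of_ne_zero hj)
  rw [Nat.nth_prime_zero_eq_two] at h
  exact h.ne'

lemma factorization_prime9_pow_two (j e : ℕ) :
    (prime9 j ^ e).factorization 2 = if j = 0 then e else 0 := by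
  rw [(prime9_prime j).factorization_pow, Finsupp.single_apply]
  rcases eq_or_ne j 0 with rfl | hj
  · simp [prime9_zero]
  · simp [hj, prime9_ne_two hj]

lemma padicValNat_two_denom (k : ℕ → ℕ) {m : ℕ} (hm : m ≠ 0) (l : ℕ) :
    padicValNat 2 ((∏ j ∈ Finset.range m, prime9 j ^ k j) * prime9 m ^ l) = k 0 := by
  have hpow : ∀ j e, prime9 j ^ e ≠ 0 := fun j e => pow_ne_zero _ (prime9_prime j).ne_zero
  rw [← Nat.factorization_def _ Nat.prime_two,
    Nat.factorization_mul (Finset.prod_ne_zero_iff.2 fun j _ => hpow j (k j)) (hpow m l),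
    Nat.factorization_prod fun j _ => hpow j (k j)]
  simp only [Finsupp.add_apply, Finsupp.finsetSum_apply, factorization_prime9_pow_two]
  simp [hm, Nat.pos_of_ne_zero hm]

theorem neg_padicValNat_le_padicValRat_div (p : ℕ) [Fact p.Prime] (a : ℤ) {d : ℕ}
    (hd : d ≠ 0) : -(padicValNat p d : ℤ) ≤ padicValRat p (a / d) := by
  rcases eq_or_ne a 0 with rfl | ha
  · simp
  rw [padicValRat.div (Int.cast_ne_zero.2 ha) (Nat.cast_ne_zero.2 hd), padicValRat.of_int,
    padicValRat.of_nat]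
  omega

theorem eq_zero_of_forall_pow_mul_eq (p : ℕ) [Fact p.Prime] {q : ℚ} (K : ℤ)
    (h : ∀ n : ℕ, ∃ y : ℚ, -K ≤ padicValRat p y ∧ (p : ℚ) ^ n * y = q) : q = 0 := by
  by_contra hq
  set n := (padicValRat p q + K + 1).toNat with hn
  obtain ⟨y, hyK, hyq⟩ := h n
  have hy : y ≠ 0 := by rintro rfl; simp [← hyq] at hq
  have hp : (p : ℚ) ≠ 0 := Nat.cast_ne_zero.2 (Fact.out : p.Prime).ne_zero
  have hval : padicValRat p q = n + padicValRat p y := by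
    rw [← hyq, padicValRat.mul (pow_ne_zero _ hp) hy, padicValRat.pow,
      padicValRat.self (Fact.out : p.Prime).one_lt, mul_one]
  omega

namespace Gmem9

variable {k : ℕ → ℕ} {n : ℕ} {q : ℚ}

lemma zero : Gmem9 k n 0 := ⟨0, 0, by simp⟩

lemma neg_le_padicValRat_two (hn : n ≠ 0) (h : Gmem9 k n q) :
    -(k 0 : ℤ) ≤ padicValRat 2 q := by
  obtain ⟨a, l, rfl⟩ := h
  have hD : (∏ j ∈ Finset.range n, prime9 j ^ k j) * prime9 n ^ l ≠ 0 :=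
    mul_ne_zero (Finset.prod_ne_zero_iff.2 fun j _ => pow_ne_zero (k j) (prime9_prime j).ne_zero)
      (pow_ne_zero l (prime9_prime n).ne_zero)
  have := neg_padicValNat_le_padicValRat_div 2 a hD
  rw [padicValNat_two_denom k hn] at this
  exact_mod_cast this

lemma div_prime9_pow (h : Gmem9 k n q) (e : ℕ) : Gmem9 k n (q / (prime9 n : ℚ) ^ e) := by
  obtain ⟨a, l, rfl⟩ := h
  exact ⟨a, l + e, by rw [div_div, pow_add, mul_assoc]⟩

end Gmem9

lemma gtilde9_single {k : ℕ → ℕ} {t : ℚ} (ht : Gmem9 k 0 t) : Gtilde9 k (Pi.single 0 t) := by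
  refine ⟨fun n => ?_, 1, fun m hm => ?_⟩
  · rcases eq_or_ne n 0 with rfl | hn
    · simpa
    · simpa [hn] using Gmem9.zero
  · simp [Nat.one_le_iff_ne_zero.1 hm]

theorem stmt_9_general (k : ℕ → ℕ) (x : ℕ → ℚ) (hx : Gtilde9 k x) :
    (∀ n : ℕ, ∃ y : ℕ → ℚ, Gtilde9 k y ∧ ∀ i, (prime9 0 : ℚ) ^ n * y i = x i) ↔
      (∀ m, 1 ≤ m → x m = 0) := by
  rw [prime9_zero]
  constructor
  · intro hdiv m hm
    refine eq_zero_of_forall_pow_mul_eq 2 (k 0) fun n => ?_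
    obtain ⟨y, hy, hyx⟩ := hdiv n
    exact ⟨y m, (hy.1 m).neg_le_padicValRat_two (by omega), hyx m⟩
  · intro hx0 n
    have hx0n : Gmem9 k 0 (x 0 / 2 ^ n) := by
      simpa [prime9_zero] using (hx.1 0).div_prime9_pow n
    refine ⟨Pi.single 0 (x 0 / 2 ^ n), gtilde9_single hx0n, fun i => ?_⟩
    rcases eq_or_ne i 0 with rfl | hi
    · simp [mul_div_cancel₀]
    · simp [hi, hx0 i (Nat.one_le_iff_ne_zero.2 hi)]

/-- an element `x ∈ G̃` is divisible by `p₁^n = 2^n` for every `n` iff it is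
of the form `(t, 0, 0, …)` with `t ∈ G₁`. -/
theorem stmt_9 (k : ℕ → ℕ) (hk : ∀ j, 1 ≤ k j) (x : ℕ → ℚ) (hx : Gtilde9 k x) :
    (∀ n : ℕ, ∃ y : ℕ → ℚ, Gtilde9 k y ∧ ∀ i, (prime9 0 : ℚ) ^ n * y i = x i) ↔
      (∀ m, 1 ≤ m → x m = 0) :=
  stmt_9_general k x hx
end

section
/- With G̃ as above (sequences in ∏ G_n that are eventually constant), G̃^+ the set of elements with all coordinates ≥ 0, and order unit e = (1,1,1,...): every ordered-group automorphism α of (G̃, G̃^+) with α(e) = e fixes the element e_1 = (1, 0, 0, 0, ...). (Proof sketch: e_1 generates the subgroup of elements infinitely p_1-divisible in G̃ together with positivity; α(e_1) = (t,0,0,...) with t ∈ G_1, t > 0; positivity of α(e - e_1) gives t ≤ 1, and applying the same argument to α^{-1} gives t ≥ 1.) -/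
/-- the `j`-th prime (`prime10 0 = 2`, `prime10 1 = 3`, ...). -/
noncomputable def prime10 (j : ℕ) : ℕ := Nat.nth Nat.Prime j

/-- membership in the group `G_n = { m / (p₁^{k₁} ⋯ p_{n-1}^{k_{n-1}} pₙ^l) }`
(indexed from `0`). -/
noncomputable def Gmem10 (k : ℕ → ℕ) (n : ℕ) (q : ℚ) : Prop :=
  ∃ m : ℤ, ∃ l : ℕ,
    q = (m : ℚ) / ((∏ j ∈ Finset.range n, (prime10 j : ℚ) ^ k j) * (prime10 n : ℚ) ^ l)

/-- membership in `G̃`: eventually constant sequences with `a n ∈ G_n` for all `n`. -/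
noncomputable def Gtilde10 (k : ℕ → ℕ) (a : ℕ → ℚ) : Prop :=
  (∀ n, Gmem10 k n (a n)) ∧ ∃ N, ∀ m, N ≤ m → a m = a N

/-!
Every element of `G_n` with `n ≥ 1` has `2`-adic valuation at least `-k₀`, so `0` is the only
element of `G_n` divisible there by every power of `2`. Since `e₁ = (1, 0, 0, …)` is divisible in
`G̃` by every power of `2`, so is `α e₁`, whence `α e₁` is supported in the coordinate `0`; with
`0 ≤ α e₁ ≤ α e = e` this gives `α e₁ ≤ e₁`. The same holds for `α⁻¹`, and applying the monotone
map `α` to `α⁻¹ e₁ ≤ e₁` gives `e₁ ≤ α e₁`.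
-/

open Set

section AdditiveOn

variable {G H : Type*}

theorem map_nsmul_of_map_add [AddGroup G] [AddGroup H] {S : AddSubgroup G} {f : G → H}
    (hf : ∀ x ∈ S, ∀ y ∈ S, f (x + y) = f x + f y) {x : G} (hx : x ∈ S) (n : ℕ) :
    f (n • x) = n • f x :=
  map_nsmul (AddMonoidHom.mk' (fun y : S => f y) fun a b => hf a a.2 b b.2) n ⟨x, hx⟩

theorem map_add_of_leftInvOn [AddMonoid G] [AddMonoid H] {S : AddSubmonoid G}
    {T : AddSubmonoid H} {f : G → H} {g : H → G} (hg : MapsTo g T S)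
    (hf : ∀ x ∈ S, ∀ y ∈ S, f (x + y) = f x + f y) (hgf : LeftInvOn g f S)
    (hfg : LeftInvOn f g T) : ∀ x ∈ T, ∀ y ∈ T, g (x + y) = g x + g y := by
  intro x hx y hy
  calc g (x + y) = g (f (g x) + f (g y)) := by rw [hfg hx, hfg hy]
    _ = g x + g y := by rw [← hf _ (hg hx) _ (hg hy), hgf (S.add_mem (hg hx) (hg hy))]

theorem monotoneOn_of_map_add_of_nonneg [AddCommGroup G] [PartialOrder G] [IsOrderedAddMonoid G]
    [AddCommMonoid H] [PartialOrder H] [IsOrderedAddMonoid H] {S : AddSubgroup G} {f : G → H}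
    (hf : ∀ x ∈ S, ∀ y ∈ S, f (x + y) = f x + f y) (hpos : ∀ x ∈ S, 0 ≤ x → 0 ≤ f x) :
    MonotoneOn f S := by
  intro x hx y hy hxy
  have hyx : y - x ∈ S := S.sub_mem hy hx
  calc f x ≤ f (y - x) + f x := le_add_of_nonneg_left (hpos _ hyx (sub_nonneg.2 hxy))
    _ = f y := by rw [← hf _ hyx _ hx, sub_add_cancel]

end AdditiveOn

lemma prime10_zero : prime10 0 = 2 := Nat.nth_prime_zero_eq_two

lemma prime10_prime (j : ℕ) : (prime10 j).Prime := Nat.prime_nth_prime j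

lemma prime10_ne_two {j : ℕ} (hj : j ≠ 0) : prime10 j ≠ 2 := by
  rw [← prime10_zero]
  exact (Nat.nth_injective Nat.infinite_setOfPred_prime).ne hj

lemma padicValRat_two_prime10 (j : ℕ) :
    padicValRat 2 (prime10 j) = if j = 0 then 1 else 0 := by
  rw [padicValRat.of_nat]
  split_ifs with hj
  · simp [hj, prime10_zero]
  · have := Fact.mk (prime10_prime j)
    simp [padicValNat_primes (prime10_ne_two hj).symm]

lemma prime10_cast_ne_zero (j : ℕ) : (prime10 j : ℚ) ≠ 0 := by
  exact_mod_cast (prime10_prime j).ne_zero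

lemma padicValRat_two_prod_prime10_pow (k : ℕ → ℕ) (n : ℕ) :
    padicValRat 2 (∏ j ∈ Finset.range n, (prime10 j : ℚ) ^ k j) = if n = 0 then 0 else k 0 := by
  induction n with
  | zero => simp
  | succ n ih =>
    rw [Finset.prod_range_succ, padicValRat.mul
      (Finset.prod_ne_zero_iff.2 fun j _ => pow_ne_zero _ (prime10_cast_ne_zero j))
      (pow_ne_zero _ (prime10_cast_ne_zero n)), ih, padicValRat.pow, padicValRat_two_prime10]
    rcases n with _ | n <;> simp

namespace Gmem10

variable {k : ℕ → ℕ} {n : ℕ} {q : ℚ}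

lemma neg_le_padicValRat_two (hn : n ≠ 0) (hq : Gmem10 k n q) :
    -(k 0 : ℤ) ≤ padicValRat 2 q := by
  obtain ⟨m, l, rfl⟩ := hq
  rcases eq_or_ne m 0 with rfl | hm
  · simp
  have hP := Finset.prod_ne_zero_iff.2 fun j (_ : j ∈ Finset.range n) =>
    pow_ne_zero (k j) (prime10_cast_ne_zero j)
  have hpow := pow_ne_zero l (prime10_cast_ne_zero n)
  rw [padicValRat.div (Int.cast_ne_zero.2 hm) (mul_ne_zero hP hpow), padicValRat.mul hP hpow,
    padicValRat_two_prod_prime10_pow,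
    padicValRat.pow, padicValRat_two_prime10, if_neg hn, if_neg hn, padicValRat.of_int]
  simp

lemma eq_zero_of_forall_two_pow_dvd (hn : n ≠ 0)
    (h : ∀ M : ℕ, ∃ z, Gmem10 k n z ∧ q = 2 ^ M * z) : q = 0 := by
  by_contra hq
  set M := (padicValRat 2 q + k 0 + 1).toNat
  obtain ⟨z, hz, hqz⟩ := h M
  have hz0 : z ≠ 0 := by rintro rfl; simp_all
  have hval : padicValRat 2 q = M + padicValRat 2 z := by
    have h2 : padicValRat 2 (2 : ℚ) = 1 := by
      exact_mod_cast padicValRat.self (p := 2) one_lt_two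
    rw [hqz, padicValRat.mul (by positivity) hz0, padicValRat.pow, h2, mul_one]
  have := hz.neg_le_padicValRat_two hn
  omega

lemma one_mem (k : ℕ → ℕ) (n : ℕ) : Gmem10 k n 1 := by
  refine ⟨∏ j ∈ Finset.range n, (prime10 j : ℤ) ^ k j, 0, ?_⟩
  have := Finset.prod_ne_zero_iff.2 fun j (_ : j ∈ Finset.range n) =>
    pow_ne_zero (k j) (prime10_cast_ne_zero j)
  push_cast
  field_simp

lemma inv_two_pow_mem (k : ℕ → ℕ) (M : ℕ) : Gmem10 k 0 (2 ^ M)⁻¹ :=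
  ⟨1, M, by simp [prime10_zero]⟩

end Gmem10

def Gmem10.addSubgroup (k : ℕ → ℕ) (n : ℕ) : AddSubgroup ℚ where
  carrier := {q | Gmem10 k n q}
  zero_mem' := ⟨0, 0, by simp⟩
  add_mem' := by
    rintro _ _ ⟨m₁, l₁, rfl⟩ ⟨m₂, l₂, rfl⟩
    refine ⟨m₁ * prime10 n ^ l₂ + m₂ * prime10 n ^ l₁, l₁ + l₂, ?_⟩
    have := Finset.prod_ne_zero_iff.2 fun j (_ : j ∈ Finset.range n) =>
      pow_ne_zero (k j) (prime10_cast_ne_zero j)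
    have := prime10_cast_ne_zero n
    field_simp
    push_cast
    ring
  neg_mem' := by
    rintro _ ⟨m, l, rfl⟩
    exact ⟨-m, l, by push_cast; ring⟩

def Gtilde10.addSubgroup (k : ℕ → ℕ) : AddSubgroup (ℕ → ℚ) where
  carrier := {a | Gtilde10 k a}
  zero_mem' := ⟨fun n => (Gmem10.addSubgroup k n).zero_mem, 0, fun _ _ => rfl⟩
  add_mem' := by
    rintro a b ⟨ha, N₁, hN₁⟩ ⟨hb, N₂, hN₂⟩
    refine ⟨fun n => (Gmem10.addSubgroup k n).add_mem (ha n) (hb n), max N₁ N₂, fun m hm => ?_⟩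
    rw [Pi.add_apply, Pi.add_apply, hN₁ m (le_of_max_le_left hm), hN₂ m (le_of_max_le_right hm),
      hN₁ _ (le_max_left N₁ N₂), hN₂ _ (le_max_right N₁ N₂)]
  neg_mem' := by
    rintro a ⟨ha, N, hN⟩
    exact ⟨fun n => (Gmem10.addSubgroup k n).neg_mem (ha n), N,
      fun m hm => congrArg Neg.neg (hN m hm)⟩

local notation "G̃" => Gtilde10.addSubgroup

namespace Gtilde10

lemma one_mem (k : ℕ → ℕ) : (1 : ℕ → ℚ) ∈ G̃ k :=
  ⟨fun n => Gmem10.one_mem k n, 0, fun _ _ => rfl⟩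

lemma single_zero_mem {k : ℕ → ℕ} {c : ℚ} (hc : Gmem10 k 0 c) : Pi.single 0 c ∈ G̃ k := by
  refine ⟨fun n => ?_, 1, fun m hm => ?_⟩
  · rcases eq_or_ne n 0 with rfl | hn
    · simpa using hc
    · rw [Pi.single_eq_of_ne hn]
      exact (Gmem10.addSubgroup k n).zero_mem
  · simp [Nat.one_le_iff_ne_zero.1 hm]

end Gtilde10

section Automorphism

variable {k : ℕ → ℕ} {α : (ℕ → ℚ) → (ℕ → ℚ)}

lemma apply_single_zero_one_eq_zero (hmap : MapsTo α (G̃ k) (G̃ k))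
    (hadd : ∀ x ∈ G̃ k, ∀ y ∈ G̃ k, α (x + y) = α x + α y) {n : ℕ} (hn : n ≠ 0) :
    α (Pi.single 0 1) n = 0 := by
  refine Gmem10.eq_zero_of_forall_two_pow_dvd (k := k) hn fun M => ?_
  have hw := Gtilde10.single_zero_mem (Gmem10.inv_two_pow_mem k M)
  refine ⟨α (Pi.single 0 (2 ^ M)⁻¹) n, (hmap hw).1 n, ?_⟩
  have he : (Pi.single 0 1 : ℕ → ℚ) = (2 ^ M) • Pi.single 0 ((2 : ℚ) ^ M)⁻¹ := by
    rw [← Pi.single_smul', nsmul_eq_mul]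
    push_cast
    rw [mul_inv_cancel₀ (by positivity)]
  rw [he, map_nsmul_of_map_add hadd hw, Pi.smul_apply, nsmul_eq_mul, Nat.cast_pow, Nat.cast_ofNat]

lemma apply_single_zero_one_le (hmap : MapsTo α (G̃ k) (G̃ k))
    (hadd : ∀ x ∈ G̃ k, ∀ y ∈ G̃ k, α (x + y) = α x + α y)
    (hpos : ∀ x ∈ G̃ k, 0 ≤ x → 0 ≤ α x) (hone : α 1 = 1) :
    α (Pi.single 0 1) ≤ Pi.single 0 1 := by
  have hle : α (Pi.single 0 1) ≤ 1 := hone ▸ monotoneOn_of_map_add_of_nonneg hadd hpos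
    (Gtilde10.single_zero_mem (Gmem10.one_mem k 0)) (Gtilde10.one_mem k)
    fun n => by rcases eq_or_ne n 0 with rfl | hn <;> simp [*]
  intro n
  rcases eq_or_ne n 0 with rfl | hn
  · simpa using hle 0
  · simp [apply_single_zero_one_eq_zero hmap hadd hn, hn]

end Automorphism

theorem stmt_10_general (k : ℕ → ℕ)
    (α β : (ℕ → ℚ) → (ℕ → ℚ))
    (hαmap : ∀ x, Gtilde10 k x → Gtilde10 k (α x))
    (hβmap : ∀ x, Gtilde10 k x → Gtilde10 k (β x))
    (hαadd : ∀ x y, Gtilde10 k x → Gtilde10 k y → α (x + y) = α x + α y)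
    (hβα : ∀ x, Gtilde10 k x → β (α x) = x)
    (hαβ : ∀ x, Gtilde10 k x → α (β x) = x)
    (hpos : ∀ x, Gtilde10 k x → ((∀ n, 0 ≤ x n) ↔ ∀ n, 0 ≤ α x n))
    (hone : α (fun _ => 1) = fun _ => 1) :
    α (fun n => if n = 0 then 1 else 0) = fun n => if n = 0 then 1 else 0 := by
  have he₁ : (fun n : ℕ => if n = 0 then (1 : ℚ) else 0) = Pi.single 0 1 := by
    ext n
    simp [Pi.single_apply]
  have he₁mem : Pi.single 0 1 ∈ G̃ k := Gtilde10.single_zero_mem (Gmem10.one_mem k 0)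
  have hαadd' : ∀ x ∈ G̃ k, ∀ y ∈ G̃ k, α (x + y) = α x + α y :=
    fun x hx y hy => hαadd x y hx hy
  have hαpos : ∀ x ∈ G̃ k, 0 ≤ x → 0 ≤ α x := fun x hx => (hpos x hx).1
  have hβpos : ∀ x ∈ G̃ k, 0 ≤ x → 0 ≤ β x := fun x hx h0 =>
    (hpos _ (hβmap x hx)).2 (by rwa [hαβ x hx])
  have hβadd := map_add_of_leftInvOn (S := (G̃ k).toAddSubmonoid) (T := (G̃ k).toAddSubmonoid)
    hβmap hαadd' hβα hαβ
  have hβone : β 1 = 1 := by simpa [show α 1 = 1 from hone] using hβα 1 (Gtilde10.one_mem k)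
  rw [he₁]
  refine le_antisymm (apply_single_zero_one_le hαmap hαadd' hαpos hone) ?_
  calc Pi.single 0 1 = α (β (Pi.single 0 1)) := (hαβ _ he₁mem).symm
    _ ≤ α (Pi.single 0 1) := monotoneOn_of_map_add_of_nonneg hαadd' hαpos (hβmap _ he₁mem)
        he₁mem (apply_single_zero_one_le hβmap hβadd hβpos hβone)

/-- every ordered-group automorphism `α` of `(G̃, G̃⁺)` fixing the order
unit `e = (1,1,1,…)` fixes `e₁ = (1,0,0,…)`.  The automorphism is encoded by a pair of
mutually inverse maps `α, β` preserving `G̃`, additive on `G̃`, and preserving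
positivity. -/
theorem stmt_10 (k : ℕ → ℕ) (hk : ∀ j, 1 ≤ k j)
    (α β : (ℕ → ℚ) → (ℕ → ℚ))
    (hαmap : ∀ x, Gtilde10 k x → Gtilde10 k (α x))
    (hβmap : ∀ x, Gtilde10 k x → Gtilde10 k (β x))
    (hαadd : ∀ x y, Gtilde10 k x → Gtilde10 k y → α (x + y) = α x + α y)
    (hβα : ∀ x, Gtilde10 k x → β (α x) = x)
    (hαβ : ∀ x, Gtilde10 k x → α (β x) = x)
    (hpos : ∀ x, Gtilde10 k x → ((∀ n, 0 ≤ x n) ↔ ∀ n, 0 ≤ α x n))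
    (hone : α (fun _ => 1) = fun _ => 1) :
    α (fun n => if n = 0 then 1 else 0) = fun n => if n = 0 then 1 else 0 :=
  stmt_10_general k α β hαmap hβmap hαadd hβα hαβ hpos hone
end
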